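/- For the conic boundary data with j = +1 and w > 0, sgn(b - a) = -sgn(p·q): indeed b - a = -(q/(w²h₁³h₂³))·(h₁³ - h₂³) and sgn(h₁³ - h₂³) = sgn(p), where h₁² = (1+p)² + q², h₂² = (1-p)² + q². -/
import Mathlib

/-- For `j = +1`, `w > 0`: `b - a = -(q/(w²h₁³h₂³))·(h₁³ - h₂³)`,
`sgn(h₁³ - h₂³) = sgn p`, and `sgn(b - a) = -sgn(p·q)`. -/
theorem curvature_difference_sign_j_pos (p q w : ℝ) (hw : 0 < w) (hq : q ≠ 0)
    (h₁ h₂ : ℝ)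
    (hh₁ : h₁ = Real.sqrt ((1 + p) ^ 2 + q ^ 2))
    (hh₂ : h₂ = Real.sqrt ((1 - p) ^ 2 + q ^ 2))
    (a b : ℝ)
    (ha : a = -q / (w ^ 2 * h₁ ^ 3))
    (hb : b = -q / (w ^ 2 * h₂ ^ 3)) :
    b - a = -(q / (w ^ 2 * h₁ ^ 3 * h₂ ^ 3)) * (h₁ ^ 3 - h₂ ^ 3) ∧
    Real.sign (h₁ ^ 3 - h₂ ^ 3) = Real.sign p ∧
    Real.sign (b - a) = -Real.sign (p * q) := by
  have hq2 : 0 < q ^ 2 := pow_pos (abs_pos.mpr hq) 2 |>.trans_eq (by rw [sq_abs])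
  have h1pos : 0 < h₁ := by
    rw [hh₁]; exact Real.sqrt_pos.mpr (by positivity)
  have h2pos : 0 < h₂ := by
    rw [hh₂]; exact Real.sqrt_pos.mpr (by positivity)
  have hsq1 : h₁ ^ 2 = (1 + p) ^ 2 + q ^ 2 := by
    rw [hh₁, Real.sq_sqrt (by positivity)]
  have hsq2 : h₂ ^ 2 = (1 - p) ^ 2 + q ^ 2 := by
    rw [hh₂, Real.sq_sqrt (by positivity)]
  have hdiff : h₁ ^ 2 - h₂ ^ 2 = 4 * p := by rw [hsq1, hsq2]; ring
  -- h₁ < h₂ ↔ p < 0, etc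
  have hlt : ∀ {x y : ℝ}, 0 < x → 0 < y → x ^ 2 < y ^ 2 → x < y := by
    intro x y hx hy h
    nlinarith
  have hcube_lt : ∀ {x y : ℝ}, 0 < x → 0 < y → x < y → x ^ 3 < y ^ 3 := by
    intro x y hx hy h; exact pow_lt_pow_left₀ h hx.le (by norm_num)
  have key1 : b - a = -(q / (w ^ 2 * h₁ ^ 3 * h₂ ^ 3)) * (h₁ ^ 3 - h₂ ^ 3) := by
    rw [ha, hb]; field_simp; ring
  have hDpos : 0 < w ^ 2 * h₁ ^ 3 * h₂ ^ 3 := by positivity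
  refine ⟨key1, ?_, ?_⟩
  · rcases lt_trichotomy p 0 with hp | hp | hp
    · have : h₁ < h₂ := hlt h1pos h2pos (by nlinarith)
      rw [Real.sign_of_neg (by nlinarith [hcube_lt h1pos h2pos this]),
        Real.sign_of_neg hp]
    · have : h₁ = h₂ := by
        subst hp; rw [hh₁, hh₂]; norm_num
      rw [this, hp]; simp
    · have : h₂ < h₁ := hlt h2pos h1pos (by nlinarith)
      rw [Real.sign_of_pos (by nlinarith [hcube_lt h2pos h1pos this]),
        Real.sign_of_pos hp]
  · rcases lt_trichotomy p 0 with hp | hp | hp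
    · have hc : h₁ ^ 3 - h₂ ^ 3 < 0 :=
        sub_neg.mpr (hcube_lt h1pos h2pos (hlt h1pos h2pos (by nlinarith)))
      rcases lt_trichotomy q 0 with hq' | hq' | hq'
      · have : b - a < 0 := by
          rw [key1]
          exact mul_neg_of_pos_of_neg (neg_pos.mpr (div_neg_of_neg_of_pos hq' hDpos)) hc
        rw [Real.sign_of_neg this, Real.sign_of_pos (mul_pos_of_neg_of_neg hp hq')]
      · exact absurd hq' hq
      · have : 0 < b - a := by
          rw [key1]
          exact mul_pos_of_neg_of_neg (by simp; positivity) hc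
        rw [Real.sign_of_pos this, Real.sign_of_neg (mul_neg_of_neg_of_pos hp hq')]
        norm_num
    · have he : h₁ = h₂ := by subst hp; rw [hh₁, hh₂]; norm_num
      rw [key1, he, hp]; simp
    · have hc : 0 < h₁ ^ 3 - h₂ ^ 3 :=
        sub_pos.mpr (hcube_lt h2pos h1pos (hlt h2pos h1pos (by nlinarith)))
      rcases lt_trichotomy q 0 with hq' | hq' | hq'
      · have : 0 < b - a := by
          rw [key1]
          exact mul_pos (neg_pos.mpr (div_neg_of_neg_of_pos hq' hDpos)) hc
        rw [Real.sign_of_pos this, Real.sign_of_neg (mul_neg_of_pos_of_neg hp hq')]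
        norm_num
      · exact absurd hq' hq
      · have : b - a < 0 := by
          rw [key1]
          exact mul_neg_of_neg_of_pos (by simp; positivity) hc
        rw [Real.sign_of_neg this, Real.sign_of_pos (mul_pos hp hq')]
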